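/- Let λ ∈ ℝ and let z, φ : ℝ² → ℝ be smooth (C^∞) functions of (x,t) with φ(x,t) ≠ 0 for all (x,t), satisfying the Lax system φ_xx = −(z + λ) φ and φ_t = 2(2λ − z) φ_x + z_x φ. Then z satisfies the KdV equation z_t = −6 z z_x − z_xxx. -/

import Mathlib

/-- Partial derivative in the first variable `x`. -/
noncomputable def px (f : ℝ → ℝ → ℝ) : ℝ → ℝ → ℝ := fun x t => deriv (fun y => f y t) x

/-- Partial derivative in the second variable `t`. -/
noncomputable def pt (f : ℝ → ℝ → ℝ) : ℝ → ℝ → ℝ := fun x t => deriv (fun s => f x s) t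

/-! Differentiating the second Lax equation twice in `x`, and eliminating `φ_xx` with the first
each time, expresses `φ_txx` as a combination of `φ` and `φ_x`; differentiating the first Lax
equation in `t` does the same for `φ_xxt`. Mixed partials of the `C³` function `φ` commute, so
the two expressions agree, and their difference is `(z_t + 6 z z_x + z_xxx) φ`. As `φ` never
vanishes, `z` solves KdV. -/

open Function

section PartialDerivatives

variable {f : ℝ → ℝ → ℝ} {x t : ℝ}

theorem HasFDerivAt.hasDerivAt_px {L : ℝ × ℝ →L[ℝ] ℝ}
    (h : HasFDerivAt (uncurry f) L (x, t)) :
    HasDerivAt (fun y => f y t) (L (1, 0)) x :=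
  (h.comp_hasDerivAt x ((hasDerivAt_id x).prodMk (hasDerivAt_const x t)) :)

theorem HasFDerivAt.hasDerivAt_pt {L : ℝ × ℝ →L[ℝ] ℝ}
    (h : HasFDerivAt (uncurry f) L (x, t)) :
    HasDerivAt (fun s => f x s) (L (0, 1)) t :=
  (h.comp_hasDerivAt t ((hasDerivAt_const t x).prodMk (hasDerivAt_id t)) :)

theorem px_eq_of_hasFDerivAt {L : ℝ × ℝ →L[ℝ] ℝ} (h : HasFDerivAt (uncurry f) L (x, t)) :
    px f x t = L (1, 0) :=
  h.hasDerivAt_px.deriv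

theorem pt_eq_of_hasFDerivAt {L : ℝ × ℝ →L[ℝ] ℝ} (h : HasFDerivAt (uncurry f) L (x, t)) :
    pt f x t = L (0, 1) :=
  h.hasDerivAt_pt.deriv

theorem DifferentiableAt.hasDerivAt_px (hf : DifferentiableAt ℝ (uncurry f) (x, t)) :
    HasDerivAt (fun y => f y t) (px f x t) x :=
  px_eq_of_hasFDerivAt hf.hasFDerivAt ▸ hf.hasFDerivAt.hasDerivAt_px

theorem DifferentiableAt.hasDerivAt_pt (hf : DifferentiableAt ℝ (uncurry f) (x, t)) :
    HasDerivAt (fun s => f x s) (pt f x t) t :=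
  pt_eq_of_hasFDerivAt hf.hasFDerivAt ▸ hf.hasFDerivAt.hasDerivAt_pt

theorem contDiff_px {n m : WithTop ℕ∞} (hf : ContDiff ℝ n (uncurry f)) (hmn : m + 1 ≤ n) :
    ContDiff ℝ m (uncurry (px f)) := by
  have hpx : uncurry (px f) = fun p => fderiv ℝ (uncurry f) p (1, 0) :=
    funext fun p => px_eq_of_hasFDerivAt
      (((hf.of_le (le_add_self.trans hmn)).differentiable one_ne_zero p).hasFDerivAt)
  rw [hpx]
  exact (hf.fderiv_right hmn).clm_apply contDiff_const

theorem px_pt_comm (hf : ContDiff ℝ 2 (uncurry f)) : px (pt f) = pt (px f) := by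
  set F := uncurry f
  have hF : Differentiable ℝ F := hf.differentiable (by norm_num)
  have hF' : Differentiable ℝ (fderiv ℝ F) :=
    (hf.fderiv_right (m := 1) le_rfl).differentiable one_ne_zero
  have hpx : px f = fun x t => fderiv ℝ F (x, t) (1, 0) :=
    funext₂ fun x t => px_eq_of_hasFDerivAt (hF (x, t)).hasFDerivAt
  have hpt : pt f = fun x t => fderiv ℝ F (x, t) (0, 1) :=
    funext₂ fun x t => pt_eq_of_hasFDerivAt (hF (x, t)).hasFDerivAt
  have hD (p w : ℝ × ℝ) : HasFDerivAt (fun q => fderiv ℝ F q w)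
      ((ContinuousLinearMap.apply ℝ ℝ w).comp (fderiv ℝ (fderiv ℝ F) p)) p :=
    (ContinuousLinearMap.apply ℝ ℝ w).hasFDerivAt.comp p (hF' p).hasFDerivAt
  ext x t
  rw [hpx, hpt,
    px_eq_of_hasFDerivAt (f := fun x t => fderiv ℝ F (x, t) (0, 1)) (hD (x, t) (0, 1)),
    pt_eq_of_hasFDerivAt (f := fun x t => fderiv ℝ F (x, t) (1, 0)) (hD (x, t) (1, 0))]
  exact (hf.contDiffAt.isSymmSndFDerivAt (by simp)).eq (1, 0) (0, 1)

end PartialDerivatives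

section Lax

variable {lam : ℝ} {z φ : ℝ → ℝ → ℝ}

theorem lax_px_pt (hz : ContDiff ℝ 2 (uncurry z)) (hφ : ContDiff ℝ 2 (uncurry φ))
    (hxx : ∀ x t, px (px φ) x t = -(z x t + lam) * φ x t)
    (ht : ∀ x t, pt φ x t = 2 * (2 * lam - z x t) * px φ x t + px z x t * φ x t) (x t : ℝ) :
    px (pt φ) x t =
      (px (px z) x t - 2 * (2 * lam - z x t) * (z x t + lam)) * φ x t - px z x t * px φ x t := by
  have hz' := (hz.differentiable two_ne_zero (x, t)).hasDerivAt_px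
  have hzx : ContDiff ℝ 1 (uncurry (px z)) := contDiff_px hz (by norm_num)
  have hφx : ContDiff ℝ 1 (uncurry (px φ)) := contDiff_px hφ (by norm_num)
  have hzx' := (hzx.differentiable one_ne_zero (x, t)).hasDerivAt_px
  have hφ' := (hφ.differentiable two_ne_zero (x, t)).hasDerivAt_px
  have hφx' := (hφx.differentiable one_ne_zero (x, t)).hasDerivAt_px
  rw [funext₂ ht]
  refine ((((hz'.const_sub (2 * lam)).const_mul 2).fun_mul hφx').add
    (hzx'.fun_mul hφ')).deriv.trans ?_
  rw [hxx]
  ring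

theorem lax_px_px_pt (hz : ContDiff ℝ 3 (uncurry z)) (hφ : ContDiff ℝ 2 (uncurry φ))
    (hxx : ∀ x t, px (px φ) x t = -(z x t + lam) * φ x t)
    (ht : ∀ x t, pt φ x t = 2 * (2 * lam - z x t) * px φ x t + px z x t * φ x t) (x t : ℝ) :
    px (px (pt φ)) x t = (px (px (px z)) x t + px z x t * (5 * z x t - lam)) * φ x t
      - 2 * (2 * lam - z x t) * (z x t + lam) * px φ x t := by
  have hzx : ContDiff ℝ 2 (uncurry (px z)) := contDiff_px hz (by norm_num)
  have hzxx : ContDiff ℝ 1 (uncurry (px (px z))) := contDiff_px hzx (by norm_num)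
  have hφx : ContDiff ℝ 1 (uncurry (px φ)) := contDiff_px hφ (by norm_num)
  have hz' := (hz.differentiable (by norm_num) (x, t)).hasDerivAt_px
  have hzx' := (hzx.differentiable two_ne_zero (x, t)).hasDerivAt_px
  have hzxx' := (hzxx.differentiable one_ne_zero (x, t)).hasDerivAt_px
  have hφ' := (hφ.differentiable two_ne_zero (x, t)).hasDerivAt_px
  have hφx' := (hφx.differentiable one_ne_zero (x, t)).hasDerivAt_px
  rw [funext₂ (lax_px_pt (hz.of_le (by norm_num)) hφ hxx ht)]
  refine (((hzxx'.fun_sub (((hz'.const_sub (2 * lam)).const_mul 2).fun_mul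
    (hz'.add_const lam))).fun_mul hφ').fun_sub (hzx'.fun_mul hφx')).deriv.trans ?_
  rw [hxx]
  ring

theorem lax_pt_px_px (hz : Differentiable ℝ (uncurry z)) (hφ : Differentiable ℝ (uncurry φ))
    (hxx : ∀ x t, px (px φ) x t = -(z x t + lam) * φ x t) (x t : ℝ) :
    pt (px (px φ)) x t = -(pt z x t * φ x t) - (z x t + lam) * pt φ x t := by
  rw [funext₂ hxx]
  refine (((hz (x, t)).hasDerivAt_pt.add_const lam).fun_neg.fun_mul
    (hφ (x, t)).hasDerivAt_pt).deriv.trans ?_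
  ring

end Lax

/-- if `(z, φ)` (with `φ` nonvanishing) solves the Lax system
`φ_xx = −(z+λ)φ`, `φ_t = 2(2λ−z)φ_x + z_x φ`, then `z` solves the KdV equation
`z_t = −6zz_x − z_xxx`. -/
theorem lax_implies_kdv (lam : ℝ) (z φ : ℝ → ℝ → ℝ)
    (hz : ContDiff ℝ (⊤ : ℕ∞) (Function.uncurry z))
    (hφ : ContDiff ℝ (⊤ : ℕ∞) (Function.uncurry φ))
    (hnz : ∀ x t, φ x t ≠ 0)
    (hxx : ∀ x t, px (px φ) x t = -(z x t + lam) * φ x t)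
    (ht : ∀ x t, pt φ x t = 2 * (2 * lam - z x t) * px φ x t + px z x t * φ x t) :
    ∀ x t, pt z x t = -6 * z x t * px z x t - px (px (px z)) x t := by
  intro x t
  have hz3 : ContDiff ℝ 3 (uncurry z) := hz.of_le (by norm_cast)
  have hφ3 : ContDiff ℝ 3 (uncurry φ) := hφ.of_le (by norm_cast)
  have hφ2 : ContDiff ℝ 2 (uncurry φ) := hφ3.of_le (by norm_num)
  have mixed : px (px (pt φ)) x t = pt (px (px φ)) x t := by
    rw [px_pt_comm hφ2, px_pt_comm (contDiff_px hφ3 le_rfl)]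
  rw [lax_px_px_pt hz3 hφ2 hxx ht, lax_pt_px_px (hz3.differentiable (by norm_num))
    (hφ2.differentiable two_ne_zero) hxx, ht] at mixed
  have hkdv : (pt z x t + 6 * z x t * px z x t + px (px (px z)) x t) * φ x t = 0 := by
    linear_combination mixed
  linarith [(mul_eq_zero.mp hkdv).resolve_right (hnz x t)]
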